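/- arXiv:2204.11074 — 6 statements merged into one kernel-verified Lean document; each statement's English description precedes it below -/
import Mathlib

section
/- For the Barnes G-function, the reflection formula holds: for all real z with 0 < z < 1, G(1 - z) = G(1 + z) · (2π)^{-z} · exp(∫₀^z π t · cot(π t) dt). -/
open Real

/-- `GG z` is the Barnes G-function evaluated at `z + 1`, defined by the Weierstrass
product `G(z+1) = (2π)^{z/2} exp(-z(z+1)/2 - γ z²/2) ∏_{n≥1} (1+z/n)^n exp(-z + z²/(2n))`. -/
noncomputable def GG (z : ℝ) : ℝ :=
  (2 * π) ^ (z / 2) *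
    Real.exp (-(z * (z + 1)) / 2 - Real.eulerMascheroniConstant * z ^ 2 / 2) *
    ∏' n : ℕ, (1 + z / (n + 1)) ^ (n + 1) * Real.exp (-z + z ^ 2 / (2 * (n + 1)))

/-!
Taking logarithms in the Weierstrass product, `G(1 - z) / G(1 + z)` equals `(2π)^(-z)` times
`exp (z + ∑ₙ (ℓₙ(-z) - ℓₙ(z)))`, where `ℓₙ` is the logarithm of the `n`-th factor. Each difference
`ℓₙ(-z) - ℓₙ(z)` is `∫₀^z 2t² / (t² - (n+1)²) dt`, and by the partial fraction expansion of the
cotangent these integrands sum to `π t cot (π t) - 1`; dominated convergence exchanges the sum and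
the integral.
-/

open Set MeasureTheory

lemma summable_one_div_nat_add_one_sq : Summable fun n : ℕ => 1 / ((n : ℝ) + 1) ^ 2 := by
  simpa using (summable_nat_add_iff 1).2 (Real.summable_one_div_nat_pow.2 one_lt_two)

@[fun_prop]
lemma Real.measurable_cot : Measurable cot := by
  simp_rw [funext cot_eq_cos_div_sin]
  fun_prop

lemma Real.hasSum_mul_cot {x : ℝ} (hx : ∀ n : ℤ, (n : ℝ) ≠ x) :
    HasSum (fun n : ℕ => 2 * x ^ 2 / (x ^ 2 - ((n : ℝ) + 1) ^ 2)) (π * x * cot (π * x) - 1) := by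
  have hxC : (x : ℂ) ∈ Complex.integerComplement := by
    rintro ⟨n, hn⟩
    exact hx n (by exact_mod_cast hn)
  have hC := (summable_cotTerm hxC).hasSum.mul_left (x : ℂ)
  rw [← cot_series_rep' hxC] at hC
  rw [← Complex.hasSum_ofReal]
  convert hC using 1
  · rfl
  · ext n
    rw [cotTerm_identity hxC]
    push_cast
    ring
  · have : (x : ℂ) ≠ 0 := by exact_mod_cast (hx 0).symm
    push_cast [Complex.ofReal_cot]
    field_simp

lemma intCast_ne_of_mem_Ioo {x : ℝ} (hx : x ∈ Ioo (0 : ℝ) 1) (n : ℤ) : (n : ℝ) ≠ x := by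
  rintro rfl
  have h0 : 0 < n := by exact_mod_cast hx.1
  have h1 : n < 1 := by exact_mod_cast hx.2
  omega

lemma abs_two_mul_sq_div_sq_sub_sq_le {t c : ℝ} (ht : |t| ≤ c) (hc : c < 1) (n : ℕ) :
    |2 * t ^ 2 / (t ^ 2 - ((n : ℝ) + 1) ^ 2)| ≤ 2 / (1 - c ^ 2) * (1 / ((n : ℝ) + 1) ^ 2) := by
  have hm : 1 ≤ ((n : ℝ) + 1) ^ 2 := one_le_pow₀ (by simp)
  have ht2 : t ^ 2 ≤ c ^ 2 := sq_abs t ▸ pow_le_pow_left₀ (abs_nonneg t) ht 2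
  have hc2 : c ^ 2 < 1 := by nlinarith [abs_nonneg t]
  have hden : (1 - c ^ 2) * ((n : ℝ) + 1) ^ 2 ≤ ((n : ℝ) + 1) ^ 2 - t ^ 2 := by nlinarith
  rw [abs_div, abs_of_nonneg (by positivity), abs_of_neg (by linarith), neg_sub, mul_one_div,
    div_div]
  exact div_le_div₀ zero_le_two (by nlinarith) (by nlinarith) hden

noncomputable def barnesLogFactor (z : ℝ) (n : ℕ) : ℝ :=
  ((n : ℝ) + 1) * log (1 + z / ((n : ℝ) + 1)) - z + z ^ 2 / (2 * ((n : ℝ) + 1))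

lemma abs_barnesLogFactor_le {z : ℝ} (hz : |z| < 1) (n : ℕ) :
    |barnesLogFactor z n| ≤ |z| ^ 3 / (1 - |z|) * (1 / ((n : ℝ) + 1) ^ 2) := by
  set m : ℝ := (n : ℝ) + 1
  have hm : 1 ≤ m := by simp [m]
  set x := -z / m
  have hx : |x| = |z| / m := by rw [abs_div, abs_neg, abs_of_pos (by linarith : (0 : ℝ) < m)]
  have hxz : |x| ≤ |z| := hx ▸ div_le_self (abs_nonneg z) hm
  have htaylor := Real.abs_log_sub_add_sum_range_le (hxz.trans_lt hz) 2
  simp only [Finset.sum_range_succ, Finset.sum_range_zero] at htaylor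
  have hl : barnesLogFactor z n = m * (x + x ^ 2 / 2 + log (1 - x)) := by
    simp only [barnesLogFactor, x, m]
    field_simp
    ring_nf
  calc |barnesLogFactor z n| = m * |x + x ^ 2 / 2 + log (1 - x)| := by
        rw [hl, abs_mul, abs_of_pos (by linarith)]
    _ ≤ m * (|x| ^ 3 / (1 - |x|)) := by
        gcongr
        norm_num at htaylor
        exact htaylor
    _ ≤ m * (|x| ^ 3 / (1 - |z|)) := by gcongr
    _ = |z| ^ 3 / (1 - |z|) * (1 / m ^ 2) := by
        rw [hx]
        field_simp

lemma summable_barnesLogFactor {z : ℝ} (hz : |z| < 1) : Summable (barnesLogFactor z) :=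
  .of_norm_bounded (summable_one_div_nat_add_one_sq.mul_left _) (abs_barnesLogFactor_le hz)

lemma exp_barnesLogFactor {z : ℝ} (hz : -1 < z) (n : ℕ) :
    exp (barnesLogFactor z n) =
      (1 + z / ((n : ℝ) + 1)) ^ (n + 1) * exp (-z + z ^ 2 / (2 * ((n : ℝ) + 1))) := by
  have hm : (0 : ℝ) < (n : ℝ) + 1 := by positivity
  have hpos : 0 < 1 + z / ((n : ℝ) + 1) := by
    rw [one_add_div hm.ne']
    exact div_pos (by linarith [n.cast_nonneg (α := ℝ)]) hm
  rw [barnesLogFactor, ← exp_log hpos, ← exp_nat_mul, ← exp_add, exp_log hpos]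
  push_cast
  ring_nf

lemma GG_eq_exp {z : ℝ} (hz : |z| < 1) :
    GG z = (2 * π) ^ (z / 2) * exp (-(z * (z + 1)) / 2 - eulerMascheroniConstant * z ^ 2 / 2 +
      ∑' n, barnesLogFactor z n) := by
  have hprod := (summable_barnesLogFactor hz).hasSum.rexp.tprod_eq
  simp only [Function.comp_def, exp_barnesLogFactor (neg_lt_of_abs_lt hz)] at hprod
  rw [GG, hprod, mul_assoc, ← exp_add]

lemma GG_neg {z : ℝ} (hz : |z| < 1) :
    GG (-z) = GG z * (2 * π) ^ (-z) *
      exp (z + ∑' n, (barnesLogFactor (-z) n - barnesLogFactor z n)) := by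
  have hz' : |-z| < 1 := by rwa [abs_neg]
  rw [GG_eq_exp hz, GG_eq_exp hz', (summable_barnesLogFactor hz').tsum_sub
    (summable_barnesLogFactor hz), show -z / 2 = z / 2 + -z by ring, rpow_add (by positivity),
    mul_right_comm _ (exp _), mul_assoc _ (exp _), ← exp_add]
  ring_nf

lemma hasDerivAt_barnesLogFactor {t : ℝ} (n : ℕ) (ht : -((n : ℝ) + 1) < t) :
    HasDerivAt (barnesLogFactor · n) (t ^ 2 / (((n : ℝ) + 1) * ((n : ℝ) + 1 + t))) t := by
  have hm : (0 : ℝ) < (n : ℝ) + 1 := by positivity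
  have hpos : 0 < (n : ℝ) + 1 + t := by linarith
  have hlog : HasDerivAt (fun t => log (1 + t / ((n : ℝ) + 1))) (1 / ((n : ℝ) + 1 + t)) t := by
    have := (((hasDerivAt_id' t).div_const ((n : ℝ) + 1)).const_add 1).log
      (by rw [one_add_div hm.ne']; positivity)
    convert this using 1
    field_simp
  refine (((hlog.const_mul ((n : ℝ) + 1)).fun_sub (hasDerivAt_id' t)).fun_add
    ((hasDerivAt_pow 2 t).div_const (2 * ((n : ℝ) + 1)))).congr_deriv ?_
  field_simp
  ring

lemma integral_two_mul_sq_div_sq_sub_sq {z : ℝ} (n : ℕ) (hz : |z| < (n : ℝ) + 1) :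
    ∫ t in (0 : ℝ)..z, 2 * t ^ 2 / (t ^ 2 - ((n : ℝ) + 1) ^ 2) =
      barnesLogFactor (-z) n - barnesLogFactor z n := by
  have hlt : ∀ t ∈ uIcc 0 z, |t| < (n : ℝ) + 1 := fun t ht =>
    (by simpa using abs_sub_left_of_mem_uIcc ht : |t| ≤ |z|).trans_lt hz
  have hderiv : ∀ t ∈ uIcc 0 z, HasDerivAt (fun t => barnesLogFactor (-t) n - barnesLogFactor t n)
      (2 * t ^ 2 / (t ^ 2 - ((n : ℝ) + 1) ^ 2)) t := by
    intro t ht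
    obtain ⟨hneg, hpos⟩ := abs_lt.1 (hlt t ht)
    refine (((hasDerivAt_barnesLogFactor n (neg_lt_neg hpos)).comp t (hasDerivAt_neg t)).sub
      (hasDerivAt_barnesLogFactor n hneg)).congr_deriv ?_
    have h1 : (n : ℝ) + 1 + t ≠ 0 := by linarith
    have h2 : (n : ℝ) + 1 + -t ≠ 0 := by linarith
    rw [show t ^ 2 - ((n : ℝ) + 1) ^ 2 = -(((n : ℝ) + 1 + t) * ((n : ℝ) + 1 + -t)) by ring]
    field_simp
    ring
  have hcont : ContinuousOn (fun t => 2 * t ^ 2 / (t ^ 2 - ((n : ℝ) + 1) ^ 2)) (uIcc 0 z) :=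
    ContinuousOn.div (by fun_prop) (by fun_prop) fun t ht => by
      have := sq_lt_sq.2 ((hlt t ht).trans_eq (abs_of_pos (by positivity)).symm)
      linarith
  rw [intervalIntegral.integral_eq_sub_of_hasDerivAt hderiv hcont.intervalIntegrable]
  simp [barnesLogFactor]

lemma hasSum_integral_two_mul_sq_div_sq_sub_sq {z : ℝ} (h0 : 0 ≤ z) (h1 : z < 1) :
    HasSum (fun n : ℕ => ∫ t in (0 : ℝ)..z, 2 * t ^ 2 / (t ^ 2 - ((n : ℝ) + 1) ^ 2))
      (∫ t in (0 : ℝ)..z, (π * t * cot (π * t) - 1)) := by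
  refine intervalIntegral.hasSum_integral_of_dominated_convergence
    (fun n _ => 2 / (1 - z ^ 2) * (1 / ((n : ℝ) + 1) ^ 2)) (fun n => ?_) (fun n => ?_)
    (ae_of_all _ fun _ _ => summable_one_div_nat_add_one_sq.mul_left _) intervalIntegrable_const
    (ae_of_all _ fun t ht => ?_)
  · exact (by fun_prop : Measurable _).aestronglyMeasurable
  · refine ae_of_all _ fun t ht => abs_two_mul_sq_div_sq_sub_sq_le ?_ h1 n
    rw [uIoc_of_le h0] at ht
    exact abs_le.2 ⟨by linarith [ht.1], ht.2⟩
  · rw [uIoc_of_le h0] at ht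
    exact Real.hasSum_mul_cot (intCast_ne_of_mem_Ioo ⟨ht.1, ht.2.trans_lt h1⟩)

lemma intervalIntegrable_mul_cot {z : ℝ} (h0 : 0 ≤ z) (h1 : z < 1) :
    IntervalIntegrable (fun t => π * t * cot (π * t)) volume 0 z := by
  set C := ∑' n : ℕ, 2 / (1 - z ^ 2) * (1 / ((n : ℝ) + 1) ^ 2)
  refine (intervalIntegrable_const (c := 1 + C)).mono_fun'
    (by fun_prop : Measurable _).aestronglyMeasurable ?_
  rw [uIoc_of_le h0]
  refine ae_restrict_of_forall_mem measurableSet_Ioc fun t ht => ?_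
  have hsum := Real.hasSum_mul_cot (intCast_ne_of_mem_Ioo ⟨ht.1, ht.2.trans_lt h1⟩)
  have := hsum.norm_le_of_bounded (summable_one_div_nat_add_one_sq.mul_left _).hasSum
    fun n => abs_two_mul_sq_div_sq_sub_sq_le (abs_le.2 ⟨by linarith [ht.1], ht.2⟩) h1 n
  calc ‖π * t * cot (π * t)‖ ≤ 1 + ‖π * t * cot (π * t) - 1‖ := by
        simpa using norm_le_norm_add_norm_sub' (π * t * cot (π * t)) 1
    _ ≤ 1 + C := by gcongr

lemma integral_mul_cot_eq {z : ℝ} (h0 : 0 ≤ z) (h1 : z < 1) :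
    ∫ t in (0 : ℝ)..z, π * t * cot (π * t) =
      z + ∑' n, (barnesLogFactor (-z) n - barnesLogFactor z n) := by
  have hz (n : ℕ) : |z| < (n : ℝ) + 1 := by rw [abs_of_nonneg h0]; linarith [n.cast_nonneg (α := ℝ)]
  have hsum := hasSum_integral_two_mul_sq_div_sq_sub_sq h0 h1
  simp only [integral_two_mul_sq_div_sq_sub_sq _ (hz _)] at hsum
  rw [hsum.tsum_eq, intervalIntegral.integral_sub (intervalIntegrable_mul_cot h0 h1)
    intervalIntegrable_const]
  simp

/-- Reflection formula for the Barnes G-function: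
`G(1-z) = G(1+z) (2π)^{-z} exp(∫₀^z π t cot(π t) dt)` for `0 < z < 1`. -/
theorem barnesG_reflection (z : ℝ) (h0 : 0 < z) (h1 : z < 1) :
    GG (-z) = GG z * (2 * π) ^ (-z) *
      Real.exp (∫ t in (0:ℝ)..z, π * t * (Real.cos (π * t) / Real.sin (π * t))) := by
  simp_rw [← cot_eq_cos_div_sin]
  rw [integral_mul_cot_eq h0.le h1, GG_neg (abs_lt.2 ⟨by linarith, h1⟩)]
end

section
/- The logarithmic derivative of the Barnes G-function satisfies d/dz log G(z+1) = (1/2)·log(2π) - 1/2 - z + z · d/dz log Γ(z+1), for z > 0. -/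
open Real

/-!
Taking logarithms in the Weierstrass products, `log G(x+1)` becomes a quadratic polynomial plus
`∑ barnesTerm (n+1) x`, and `log Γ(x+1)` becomes `-γ x + ∑ gammaTerm (n+1) x` (Euler's limit
formula for `Γ`). The `k`-th terms have derivatives `x² / (k (k + x))` and `x / (k (k + x))`, the
first being `x` times the second, and both are `O(1/k²)` locally uniformly on `x > -1/2`, so the
two series can be differentiated termwise and their derivatives compared.
-/

open Filter Topology Set

local notation "γ" => Real.eulerMascheroniConstant

/- `gammaTerm k x` and `barnesTerm k x` are the logarithms of the Weierstrass factors
`(1 + x/k)⁻¹ e^{x/k}` of `Γ(x+1)` and `(1 + x/k)^k e^{-x + x²/(2k)}` of `G(x+1)`. -/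
noncomputable def gammaTerm (k x : ℝ) : ℝ := x / k - log (1 + x / k)

noncomputable def barnesTerm (k x : ℝ) : ℝ := k * log (1 + x / k) - x + x ^ 2 / (2 * k)

lemma one_add_div_pos {k x : ℝ} (hk : 0 < k) (hx : -k < x) : 0 < 1 + x / k := by
  have : -1 < x / k := by rw [lt_div_iff₀ hk]; linarith
  linarith

lemma hasDerivAt_gammaTerm {k x : ℝ} (hk : 0 < k) (hx : -k < x) :
    HasDerivAt (gammaTerm k) (x / (k * (k + x))) x := by
  have hdiv := (hasDerivAt_id' x).div_const k
  refine (hdiv.sub ((hdiv.const_add 1).log (one_add_div_pos hk hx).ne')).congr_deriv ?_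
  have : k + x ≠ 0 := by linarith
  field_simp
  ring

lemma hasDerivAt_barnesTerm {k x : ℝ} (hk : 0 < k) (hx : -k < x) :
    HasDerivAt (barnesTerm k) (x * (x / (k * (k + x)))) x := by
  have hdiv := (hasDerivAt_id' x).div_const k
  refine ((((hdiv.const_add 1).log (one_add_div_pos hk hx).ne').const_mul k).sub
    (hasDerivAt_id' x)).add ((hasDerivAt_pow 2 x).div_const (2 * k)) |>.congr_deriv ?_
  have : k + x ≠ 0 := by linarith
  field_simp
  ring

lemma abs_div_mul_add_le {k x R : ℝ} (hk : 1 ≤ k) (hx : -1 / 2 < x) (hxR : |x| ≤ R) :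
    |x / (k * (k + x))| ≤ 2 * R / k ^ 2 := by
  have hkx : 0 < k * (k + x) := mul_pos (by linarith) (by linarith)
  rw [abs_div, abs_of_pos hkx, div_le_div_iff₀ hkx (by positivity)]
  calc |x| * k ^ 2 = (|x| * k) * k := by ring
    _ ≤ (|x| * k) * (2 * (k + x)) := by gcongr; linarith
    _ ≤ (R * k) * (2 * (k + x)) := by gcongr; linarith
    _ = 2 * R * (k * (k + x)) := by ring

lemma summable_const_div_nat_add_one_sq (C : ℝ) :
    Summable (fun n : ℕ => C / ((n : ℝ) + 1) ^ 2) := by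
  have := (summable_nat_add_iff 1).2 (Real.summable_one_div_nat_pow.2 one_lt_two)
  simpa [div_eq_mul_one_div C] using this.mul_left C

lemma summable_and_hasDerivAt_tsum {f f' : ℕ → ℝ → ℝ} {u : ℕ → ℝ} {a b x : ℝ}
    (hu : Summable u) (hab : 0 ∈ Ioo a b)
    (hf : ∀ n, ∀ y ∈ Ioo a b, HasDerivAt (f n) (f' n y) y)
    (hf' : ∀ n, ∀ y ∈ Ioo a b, ‖f' n y‖ ≤ u n) (hf0 : Summable (f · 0))
    (hx : x ∈ Ioo a b) :
    Summable (f · x) ∧ HasDerivAt (fun y => ∑' n, f n y) (∑' n, f' n x) x :=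
  ⟨summable_of_summable_hasDerivAt_of_isPreconnected hu isOpen_Ioo isPreconnected_Ioo hf hf'
      hab hf0 hx,
    hasDerivAt_tsum_of_isPreconnected hu isOpen_Ioo isPreconnected_Ioo hf hf' hab hf0 hx⟩

lemma summable_and_hasDerivAt_tsum_gammaTerm {x : ℝ} (hx : -1 / 2 < x) :
    Summable (fun n : ℕ => gammaTerm (n + 1) x) ∧
      HasDerivAt (fun y => ∑' n : ℕ, gammaTerm (n + 1) y)
        (∑' n : ℕ, x / ((n + 1) * ((n + 1) + x))) x := by
  set R := |x| + 1
  refine summable_and_hasDerivAt_tsum (summable_const_div_nat_add_one_sq (2 * R))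
    (a := -1 / 2) (b := R) ⟨by norm_num, by positivity⟩
    (fun n y hy => hasDerivAt_gammaTerm (by positivity)
      (by linarith [hy.1, n.cast_nonneg (α := ℝ)]))
    (fun n y hy => ?_) (by simp [gammaTerm]) ⟨hx, by linarith [le_abs_self x]⟩
  have hyR : |y| ≤ R := abs_le.2 ⟨by linarith [hy.1, abs_nonneg x], hy.2.le⟩
  exact abs_div_mul_add_le (by simp) hy.1 hyR

lemma summable_and_hasDerivAt_tsum_barnesTerm {x : ℝ} (hx : -1 / 2 < x) :
    Summable (fun n : ℕ => barnesTerm (n + 1) x) ∧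
      HasDerivAt (fun y => ∑' n : ℕ, barnesTerm (n + 1) y)
        (x * ∑' n : ℕ, x / ((n + 1) * ((n + 1) + x))) x := by
  set R := |x| + 1
  rw [← tsum_mul_left]
  refine summable_and_hasDerivAt_tsum (summable_const_div_nat_add_one_sq (R * (2 * R)))
    (a := -1 / 2) (b := R) ⟨by norm_num, by positivity⟩
    (fun n y hy => hasDerivAt_barnesTerm (by positivity)
      (by linarith [hy.1, n.cast_nonneg (α := ℝ)]))
    (fun n y hy => ?_) (by simp [barnesTerm]) ⟨hx, by linarith [le_abs_self x]⟩
  have hyR : |y| ≤ R := abs_le.2 ⟨by linarith [hy.1, abs_nonneg x], hy.2.le⟩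
  rw [norm_mul, mul_div_assoc]
  exact mul_le_mul hyR (abs_div_mul_add_le (by simp) hy.1 hyR) (abs_nonneg _) (by positivity)

lemma sum_range_gammaTerm {x : ℝ} (hx : 0 < x) (N : ℕ) :
    ∑ n ∈ Finset.range N, gammaTerm (n + 1) x =
      x * (harmonic N - log N) + log x + BohrMollerup.logGammaSeq x N := by
  induction N with
  | zero => simp [BohrMollerup.logGammaSeq]
  | succ N ih =>
    have hN : (N : ℝ) + 1 ≠ 0 := by positivity
    have hlog : log (1 + x / (N + 1)) = log (x + (N + 1)) - log (N + 1) := by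
      rw [← log_div (by positivity) hN]
      congr 1
      field_simp
      ring
    rw [Finset.sum_range_succ, ih, gammaTerm, hlog]
    simp only [BohrMollerup.logGammaSeq, harmonic_succ, Nat.factorial_succ, Finset.sum_range_succ]
    push_cast
    rw [log_mul hN (by positivity)]
    ring

lemma hasSum_gammaTerm {x : ℝ} (hx : 0 < x) :
    HasSum (fun n : ℕ => gammaTerm (n + 1) x) (log (Gamma (x + 1)) + γ * x) := by
  have hlim : Tendsto (fun N : ℕ => x * (harmonic N - log N) + log x +
      BohrMollerup.logGammaSeq x N) atTop (𝓝 (x * γ + log x + log (Gamma x))) :=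
    ((tendsto_harmonic_sub_log.const_mul x).add_const _).add (BohrMollerup.tendsto_log_gamma hx)
  have hval : x * γ + log x + log (Gamma x) = log (Gamma (x + 1)) + γ * x := by
    rw [Gamma_add_one hx.ne', log_mul hx.ne' (Gamma_pos_of_pos hx).ne']
    ring
  rw [(summable_and_hasDerivAt_tsum_gammaTerm (by linarith)).1.hasSum_iff_tendsto_nat, ← hval]
  simpa only [sum_range_gammaTerm hx] using hlim

lemma factor_eq_exp_barnesTerm {x : ℝ} {n : ℕ} (hx : -((n : ℝ) + 1) < x) :
    (1 + x / (n + 1)) ^ (n + 1) * exp (-x + x ^ 2 / (2 * (n + 1))) =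
      exp (barnesTerm (n + 1) x) := by
  have hsplit : barnesTerm (n + 1) x =
      (n + 1) * log (1 + x / (n + 1)) + (-x + x ^ 2 / (2 * (n + 1))) := by
    rw [barnesTerm]; ring
  rw [hsplit, exp_add ((n + 1) * _), ← Nat.cast_add_one, exp_nat_mul,
    exp_log (one_add_div_pos (by positivity) (by exact_mod_cast hx))]

lemma log_GG {x : ℝ} (hx : -1 / 2 < x) :
    log (GG x) = x / 2 * log (2 * π) - x * (x + 1) / 2 - γ * x ^ 2 / 2 +
      ∑' n : ℕ, barnesTerm (n + 1) x := by
  have hprod :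
      ∏' n : ℕ, exp (barnesTerm (n + 1) x) = exp (∑' n : ℕ, barnesTerm (n + 1) x) :=
    (summable_and_hasDerivAt_tsum_barnesTerm hx).1.hasSum.rexp.tprod_eq
  rw [GG, tprod_congr fun n => factor_eq_exp_barnesTerm (by linarith [n.cast_nonneg (α := ℝ)]),
    hprod, log_mul (by positivity) (exp_ne_zero _),
    log_mul (by positivity) (exp_ne_zero _), log_rpow (by positivity), log_exp, log_exp]
  ring

lemma hasDerivAt_log_Gamma_add_one {x : ℝ} (hx : 0 < x) :
    HasDerivAt (fun t => log (Gamma (t + 1)))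
      (-γ + ∑' n : ℕ, x / ((n + 1) * ((n + 1) + x))) x := by
  have hseries : (fun t => log (Gamma (t + 1))) =ᶠ[𝓝 x]
      fun t => -(γ * t) + ∑' n : ℕ, gammaTerm (n + 1) t := by
    filter_upwards [eventually_gt_nhds hx] with t ht
    rw [(hasSum_gammaTerm ht).tsum_eq]
    ring
  exact (((hasDerivAt_id' x).const_mul γ).neg.congr_deriv (by ring)).add
    (summable_and_hasDerivAt_tsum_gammaTerm (by linarith)).2 |>.congr_of_eventuallyEq hseries

lemma hasDerivAt_log_GG {x : ℝ} (hx : -1 / 2 < x) :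
    HasDerivAt (fun t => log (GG t))
      (log (2 * π) / 2 - 1 / 2 - x - γ * x +
        x * ∑' n : ℕ, x / ((n + 1) * ((n + 1) + x))) x := by
  have hseries : (fun t => log (GG t)) =ᶠ[𝓝 x] fun t =>
      t / 2 * log (2 * π) - t * (t + 1) / 2 - γ * t ^ 2 / 2 +
        ∑' n : ℕ, barnesTerm (n + 1) t := by
    filter_upwards [eventually_gt_nhds hx] with t ht
    exact log_GG ht
  have hpoly : HasDerivAt (fun t => t / 2 * log (2 * π) - t * (t + 1) / 2 - γ * t ^ 2 / 2)
      (log (2 * π) / 2 - 1 / 2 - x - γ * x) x := by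
    have hid := hasDerivAt_id' x
    refine ((((hid.div_const 2).mul_const _).sub ((hid.mul (hid.add_const 1)).div_const 2)).sub
      ((hasDerivAt_pow 2 x).const_mul γ |>.div_const 2)).congr_deriv ?_
    ring
  exact (hpoly.add (summable_and_hasDerivAt_tsum_barnesTerm hx).2).congr_of_eventuallyEq hseries

/-- The logarithmic derivative of the Barnes G-function:
`d/dz log G(z+1) = (1/2) log(2π) - 1/2 - z + z · d/dz log Γ(z+1)` for `z > 0`. -/
theorem barnesG_log_deriv (z : ℝ) (hz : 0 < z) :
    deriv (fun t => Real.log (GG t)) z =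
      (1 / 2) * Real.log (2 * π) - 1 / 2 - z +
        z * deriv (fun t => Real.log (Real.Gamma (t + 1))) z := by
  rw [(hasDerivAt_log_GG (by linarith)).deriv, (hasDerivAt_log_Gamma_add_one hz).deriv]
  ring
end

section
/- For real z with |z| < 1, d/dz log(G(1+z)/G(1-z)) = log(2π) - π z · cot(π z). -/
open Real

/-!
Taking logarithms in the Weierstrass product, for `|t| < 1`
`log G(1+t) = t/2 log 2π - t(t+1)/2 - γt²/2 + ∑ ℓₙ(t)` with
`ℓₙ(t) = (n+1) log(1 + t/(n+1)) - t + t²/(2(n+1))`.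
Since `ℓₙ(0) = 0` and `ℓₙ'(t) = t²/((n+1)(n+1+t))` is `O(1/(n+1)²)` uniformly on
`|t| ≤ r < 1`, the series converges and may be differentiated termwise. In the derivative
of `log G(1+z) - log G(1-z)` the terms pair up to
`2z²/((n+1)² - z²) = -z (1/(z-n-1) + 1/(z+n+1))`, and the Mittag-Leffler expansion of
`π cot πz` sums these to `1 - πz cot πz`.
-/

open Filter Topology

theorem Real.hasSum_cot_series {x : ℝ} (hx : ∀ n : ℤ, x ≠ n) :
    HasSum (fun n : ℕ => 1 / (x - (n + 1)) + 1 / (x + (n + 1))) (π * cot (π * x) - 1 / x) := by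
  have hxC : (x : ℂ) ∈ Complex.integerComplement := by
    rintro ⟨n, hn⟩
    exact hx n (mod_cast hn.symm)
  rw [← Complex.hasSum_ofReal]
  push_cast
  rw [(summable_cotTerm hxC).hasSum_iff]
  exact (cot_series_rep' hxC).symm

theorem summable_div_succ_sq (c : ℝ) : Summable fun n : ℕ => c / ((n : ℝ) + 1) ^ 2 := by
  have h := (summable_nat_add_iff 1).mpr (Real.summable_one_div_nat_pow.mpr one_lt_two)
  simpa [div_eq_mul_inv] using h.mul_left c

noncomputable def logGGFactor (t : ℝ) (n : ℕ) : ℝ :=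
  (n + 1) * log (1 + t / (n + 1)) - t + t ^ 2 / (2 * (n + 1))

noncomputable def derivLogGGFactor (t : ℝ) (n : ℕ) : ℝ :=
  t ^ 2 / ((n + 1) * (n + 1 + t))

theorem one_add_div_succ_pos {t : ℝ} (ht : -1 < t) (n : ℕ) : 0 < 1 + t / ((n : ℝ) + 1) := by
  have hm : (1 : ℝ) ≤ n + 1 := by simp
  rw [one_add_div (by positivity)]
  exact div_pos (by linarith) (by positivity)

theorem exp_logGGFactor {t : ℝ} (ht : -1 < t) (n : ℕ) :
    exp (logGGFactor t n) = (1 + t / (n + 1)) ^ (n + 1) * exp (-t + t ^ 2 / (2 * (n + 1))) := by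
  have hpos := one_add_div_succ_pos ht n
  have hlog := log_pow (1 + t / ((n : ℝ) + 1)) (n + 1)
  push_cast at hlog
  rw [logGGFactor, sub_eq_add_neg, add_assoc, exp_add, ← hlog, exp_log (by positivity)]

theorem hasDerivAt_logGGFactor {t : ℝ} (ht : -1 < t) (n : ℕ) :
    HasDerivAt (logGGFactor · n) (derivLogGGFactor t n) t := by
  have hpos : 0 < (n : ℝ) + 1 + t := by linarith [show (0 : ℝ) ≤ n from n.cast_nonneg]
  have hlin : HasDerivAt (fun s : ℝ => 1 + s / (n + 1)) (1 / (n + 1)) t := by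
    simpa using ((hasDerivAt_id t).div_const ((n : ℝ) + 1)).const_add 1
  have h := (((hlin.log (one_add_div_succ_pos ht n).ne').const_mul ((n : ℝ) + 1)).sub
    (hasDerivAt_id' t)).add ((hasDerivAt_pow 2 t).div_const (2 * ((n : ℝ) + 1)))
  refine h.congr_deriv ?_
  rw [derivLogGGFactor, one_add_div (by positivity)]
  field_simp
  ring

theorem abs_derivLogGGFactor_le {r y : ℝ} (hr : r < 1) (hy : |y| ≤ r) (n : ℕ) :
    |derivLogGGFactor y n| ≤ r ^ 2 / (1 - r) / ((n : ℝ) + 1) ^ 2 := by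
  have hn : (0 : ℝ) ≤ n := n.cast_nonneg
  have hr0 : 0 ≤ r := (abs_nonneg y).trans hy
  have hy₁ : -r ≤ y := neg_le_of_abs_le hy
  -- `(n+1)(n+1+y) - (n+1)²(1-r) = (n+1)(y+r) + (n+1) r n`
  have hden : ((n : ℝ) + 1) ^ 2 * (1 - r) ≤ (n + 1) * (n + 1 + y) := by
    nlinarith [mul_nonneg (by linarith : (0 : ℝ) ≤ n + 1) (by linarith : 0 ≤ y + r),
      mul_nonneg (mul_nonneg (by linarith : (0 : ℝ) ≤ n + 1) hr0) hn]
  have hnum : y ^ 2 ≤ r ^ 2 := by rw [← sq_abs]; gcongr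
  have hpos : 0 < ((n : ℝ) + 1) * (n + 1 + y) :=
    lt_of_lt_of_le (mul_pos (by positivity) (sub_pos.mpr hr)) hden
  rw [derivLogGGFactor, abs_of_nonneg (div_nonneg (sq_nonneg y) hpos.le), div_div]
  exact div_le_div₀ (by positivity) hnum (mul_pos (sub_pos.mpr hr) (by positivity))
    (by linarith)

theorem summable_logGGFactor {t : ℝ} (ht : |t| < 1) : Summable (logGGFactor t) := by
  obtain ⟨r, htr, hr⟩ := exists_between ht
  have hball : ∀ y ∈ Metric.ball (0 : ℝ) r, -1 < y ∧ |y| ≤ r := fun y hy =>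
    ⟨neg_lt_of_abs_lt ((mem_ball_zero_iff.mp hy).trans hr), (mem_ball_zero_iff.mp hy).le⟩
  exact summable_of_summable_hasDerivAt_of_isPreconnected (g := fun n y => logGGFactor y n)
    (g' := fun n y => derivLogGGFactor y n) (summable_div_succ_sq _)
    Metric.isOpen_ball (convex_ball 0 r).isPreconnected
    (fun n y hy => hasDerivAt_logGGFactor (hball y hy).1 n)
    (fun n y hy => abs_derivLogGGFactor_le hr (hball y hy).2 n)
    (Metric.mem_ball_self ((abs_nonneg t).trans_lt htr)) (by simp [logGGFactor])
    (mem_ball_zero_iff.mpr htr)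

theorem hasDerivAt_tsum_logGGFactor {t : ℝ} (ht : |t| < 1) :
    HasDerivAt (fun s => ∑' n, logGGFactor s n) (∑' n, derivLogGGFactor t n) t := by
  obtain ⟨r, htr, hr⟩ := exists_between ht
  have hball : ∀ y ∈ Metric.ball (0 : ℝ) r, -1 < y ∧ |y| ≤ r := fun y hy =>
    ⟨neg_lt_of_abs_lt ((mem_ball_zero_iff.mp hy).trans hr), (mem_ball_zero_iff.mp hy).le⟩
  exact hasDerivAt_tsum_of_isPreconnected (g := fun n y => logGGFactor y n)
    (g' := fun n y => derivLogGGFactor y n) (summable_div_succ_sq _)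
    Metric.isOpen_ball (convex_ball 0 r).isPreconnected
    (fun n y hy => hasDerivAt_logGGFactor (hball y hy).1 n)
    (fun n y hy => abs_derivLogGGFactor_le hr (hball y hy).2 n)
    (Metric.mem_ball_self ((abs_nonneg t).trans_lt htr)) (by simp [logGGFactor])
    (mem_ball_zero_iff.mpr htr)

noncomputable def logGG (t : ℝ) : ℝ :=
  t / 2 * log (2 * π) - t * (t + 1) / 2 - eulerMascheroniConstant * t ^ 2 / 2 +
    ∑' n, logGGFactor t n

theorem GG_eq_exp_logGG {t : ℝ} (ht : |t| < 1) : GG t = exp (logGG t) := by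
  have hprod : HasProd (fun n => exp (logGGFactor t n)) (exp (∑' n, logGGFactor t n)) :=
    (summable_logGGFactor ht).hasSum.rexp
  simp only [exp_logGGFactor (neg_lt_of_abs_lt ht)] at hprod
  rw [GG, hprod.tprod_eq, rpow_def_of_pos (by positivity), ← exp_add, ← exp_add, logGG]
  congr 1
  ring

theorem hasDerivAt_logGG {t : ℝ} (ht : |t| < 1) :
    HasDerivAt logGG (log (2 * π) / 2 - t - 1 / 2 - eulerMascheroniConstant * t +
      ∑' n, derivLogGGFactor t n) t := by
  have hpoly : HasDerivAt
      (fun s : ℝ => s / 2 * log (2 * π) - s * (s + 1) / 2 - eulerMascheroniConstant * s ^ 2 / 2)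
      (log (2 * π) / 2 - t - 1 / 2 - eulerMascheroniConstant * t) t :=
    ((((hasDerivAt_id' t).div_const 2).mul_const (log (2 * π))).sub
      (((hasDerivAt_id' t).mul ((hasDerivAt_id' t).add_const 1)).div_const 2)).sub
      (((hasDerivAt_pow 2 t).const_mul eulerMascheroniConstant).div_const 2) |>.congr_deriv
      (by ring)
  exact hpoly.add (hasDerivAt_tsum_logGGFactor ht)

theorem derivLogGGFactor_add_neg {z : ℝ} (hz : |z| < 1) (n : ℕ) :
    derivLogGGFactor z n + derivLogGGFactor (-z) n =
      -z * (1 / (z - (n + 1)) + 1 / (z + (n + 1))) := by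
  have hm : (1 : ℝ) ≤ n + 1 := by simp
  obtain ⟨hz₁, hz₂⟩ := abs_lt.mp hz
  have h₁ : z - (n + 1) ≠ 0 := by linarith
  have h₂ : z + (n + 1) ≠ 0 := by linarith
  have h₃ : (n : ℝ) + 1 + z ≠ 0 := by linarith
  have h₄ : (n : ℝ) + 1 + -z ≠ 0 := by linarith
  rw [derivLogGGFactor, derivLogGGFactor]
  field_simp
  ring

theorem tsum_derivLogGGFactor_add_neg {z : ℝ} (hz : |z| < 1) (hz0 : z ≠ 0) :
    ∑' n, derivLogGGFactor z n + ∑' n, derivLogGGFactor (-z) n =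
      1 - π * z * (cos (π * z) / sin (π * z)) := by
  have hsum : ∀ {y : ℝ}, |y| < 1 → Summable (derivLogGGFactor y) := fun hy =>
    .of_norm_bounded (summable_div_succ_sq _) (abs_derivLogGGFactor_le hy le_rfl)
  have hnonint : ∀ n : ℤ, z ≠ n := by
    rintro n rfl
    exact hz0 (by simp [Int.abs_lt_one_iff.mp (by exact_mod_cast hz)])
  rw [← (hsum hz).tsum_add (hsum (by rwa [abs_neg])), tsum_congr (derivLogGGFactor_add_neg hz),
    ((hasSum_cot_series hnonint).mul_left (-z)).tsum_eq, cot_eq_cos_div_sin]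
  field_simp
  ring

/-- For `|z| < 1` (and `z ≠ 0`, so that `cot (π z)` is defined),
`d/dz log (G(1+z)/G(1-z)) = log(2π) - π z cot(π z)`. -/
theorem barnesG_log_quotient_deriv (z : ℝ) (hz : |z| < 1) (hz0 : z ≠ 0) :
    deriv (fun t => Real.log (GG t / GG (-t))) z =
      Real.log (2 * π) - π * z * (Real.cos (π * z) / Real.sin (π * z)) := by
  have hz' : |-z| < 1 := by rwa [abs_neg]
  have hGG : (fun t => log (GG t / GG (-t))) =ᶠ[𝓝 z] fun t => logGG t - logGG (-t) := by
    filter_upwards [(isOpen_lt continuous_abs continuous_const).mem_nhds hz] with t ht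
    rw [GG_eq_exp_logGG ht, GG_eq_exp_logGG (by rwa [abs_neg]), ← exp_sub, log_exp]
  have hderiv : HasDerivAt (fun t => logGG t - logGG (-t)) _ z :=
    (hasDerivAt_logGG hz).sub ((hasDerivAt_logGG hz').comp z (hasDerivAt_neg z))
  rw [hGG.deriv_eq, hderiv.deriv]
  linear_combination tsum_derivLogGGFactor_add_neg hz hz0
end

section
/- The operators L_b := (u+v)·b·∂/∂p_b + Σ_{j≥1} (b+j)·(p_j - δ_{j,1})·∂/∂p_{b+j} + ε^{-2}·Σ_{i+j=b, i,j≥1} i·j·∂²/∂p_i∂p_j + ε^{-2}·uv·δ_{b,0}, acting on formal power series in the variables p_1, p_2, …, satisfy the Virasoro commutation relations [L_{b1}, L_{b2}] = (b1 - b2)·L_{b1+b2} for all b1, b2 ≥ 0. -/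
open MvPolynomial

/-- The Virasoro-type operator
`L_b = (u+v)·b·∂/∂p_b + Σ_{j≥1} (b+j)(p_j - δ_{j,1})∂/∂p_{b+j}
      + ε^{-2} Σ_{i+j=b, i,j≥1} i·j·∂²/∂p_i∂p_j + ε^{-2} u v δ_{b,0}`,
acting on polynomials in the formal variables `p_1, p_2, …`
(here the variable with index `j` represents `p_j`). -/
noncomputable def Vir (u v ε : ℝ) (b : ℕ) (f : MvPolynomial ℕ ℝ) : MvPolynomial ℕ ℝ :=
  ((u + v) * (b : ℝ)) • pderiv b f
    + (∑ᶠ j : ℕ, if 1 ≤ j then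
        ((b + j : ℕ) : ℝ) • ((X j - if j = 1 then 1 else 0) * pderiv (b + j) f)
      else 0)
    + (ε ^ 2)⁻¹ • ∑ i ∈ Finset.Ioo 0 b, ((i * (b - i) : ℕ) : ℝ) • pderiv i (pderiv (b - i) f)
    + (if b = 0 then (ε ^ 2)⁻¹ * (u * v) else 0) • f

/-!
Only the canonical commutation relations of `D i = ∂/∂p_i` and of multiplication `M j` by
`p_j - δ_{j,1}` enter: the `D`'s commute, the `M`'s commute and `⁅D i, M j⁆ = δ_{ij}`.
On polynomials in `p_0, …, p_N` the infinite sum `W_b` in `L_b` may be cut off at `∂/∂p_N`, and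
the cut-off operators preserve these polynomials. For `b₁ + b₂ ≤ N` the cut-off operators satisfy
the Virasoro relations exactly, in any associative algebra with these relations: the `W_b` satisfy
the Witt relations, `⁅a ∂_a, W_c⁆ = a (a+c) ∂_{a+c}`, the second-order part `G_a` gives
`⁅G_a, W_c⁆ = ∑_{k+l=a+c} k l ((a-k)₊ + (k-c)₊) ∂_k ∂_l`, whose antisymmetrisation in `a, c` is
`(a - c) G_{a+c}`, and all other brackets vanish.
-/

attribute [local instance 100] LieRing.ofAssociativeRing

section Leibniz

variable {A : Type*} [Ring A]

theorem Ring.mul_lie (x y z : A) : ⁅x * y, z⁆ = x * ⁅y, z⁆ + ⁅x, z⁆ * y := by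
  simp only [Ring.lie_def]; noncomm_ring

theorem Ring.lie_mul (x y z : A) : ⁅x, y * z⁆ = y * ⁅x, z⁆ + ⁅x, y⁆ * z := by
  simp only [Ring.lie_def]; noncomm_ring

end Leibniz

theorem natCast_tsub_sub_natCast_tsub {R : Type*} [AddGroupWithOne R] (a b : ℕ) :
    ((a - b : ℕ) : R) - ((b - a : ℕ) : R) = a - b := by
  rcases le_total a b with h | h <;> simp [Nat.sub_eq_zero_of_le h, Nat.cast_sub h]

/-- In `weylFamily` below, `D i` is `∂/∂p_i` and `M j` is multiplication by `p_j - δ_{j,1}`. -/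
structure WeylFamily (A : Type*) [Ring A] where
  D : ℕ → A
  M : ℕ → A
  commute_D : ∀ i j, Commute (D i) (D j)
  commute_M : ∀ i j, Commute (M i) (M j)
  lie_D_M : ∀ i j, ⁅D i, M j⁆ = if i = j then 1 else 0

namespace WeylFamily

variable {A : Type*} [Ring A] (F : WeylFamily A)

theorem lie_D_M_mul_D (a j c : ℕ) :
    ⁅F.D a, F.M j * F.D c⁆ = if a = j then F.D c else 0 := by
  rw [Ring.lie_mul, (F.commute_D a c).lie_eq, F.lie_D_M]
  split_ifs <;> simp

theorem lie_M_mul_D_M_mul_D (j a k c : ℕ) :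
    ⁅F.M j * F.D a, F.M k * F.D c⁆ =
      (if a = k then F.M j * F.D c else 0) - if c = j then F.M k * F.D a else 0 := by
  rw [Ring.mul_lie, F.lie_D_M_mul_D, Ring.lie_mul, ← lie_skew (F.M j), (F.commute_M j k).lie_eq,
    F.lie_D_M]
  split_ifs <;> simp [sub_eq_add_neg]

variable (R : Type*) [CommRing R] [Algebra R A]

/-- Only the terms with `b + j ≤ N` are kept; with this cut-off the Witt relations
`lie_witt_witt` hold exactly, not only on polynomials in `p_0, …, p_N`. -/
def witt (N b : ℕ) : A :=
  ∑ j ∈ Finset.Icc 1 (N - b), ((b + j : ℕ) : R) • (F.M j * F.D (b + j))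

def quadratic (b : ℕ) : A :=
  ∑ i ∈ Finset.range (b + 1), ((i * (b - i) : ℕ) : R) • (F.D i * F.D (b - i))

def virasoro (α κ μ : R) (N b : ℕ) : A :=
  (α * b) • F.D b + F.witt R N b + κ • F.quadratic R b + (if b = 0 then μ else 0) • 1

variable {R}

theorem lie_D_witt {a c N : ℕ} (ha : 0 < a) (h : a + c ≤ N) :
    ⁅F.D a, F.witt R N c⁆ = ((c + a : ℕ) : R) • F.D (c + a) := by
  simp only [witt, lie_sum, lie_smul (R := R), lie_D_M_mul_D, smul_ite, smul_zero,
    Finset.sum_ite_eq, Finset.mem_Icc]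
  rw [if_pos (by omega)]

theorem smul_lie_D_witt {a c N : ℕ} (h : a + c ≤ N) :
    (a : R) • ⁅F.D a, F.witt R N c⁆ = ((a * (c + a) : ℕ) : R) • F.D (c + a) := by
  rcases Nat.eq_zero_or_pos a with rfl | ha
  · simp
  · rw [F.lie_D_witt ha h, smul_smul, Nat.cast_mul]

theorem lie_witt_witt (N a c : ℕ) :
    ⁅F.witt R N a, F.witt R N c⁆ = ((a : R) - c) • F.witt R N (a + c) := by
  have hfilter : ∀ p q : ℕ, {j ∈ Finset.Icc 1 (N - p) | p + j ∈ Finset.Icc 1 (N - q)}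
      = Finset.Icc 1 (N - (p + q)) := fun p q => by
    ext j; simp only [Finset.mem_filter, Finset.mem_Icc]; omega
  simp only [witt, sum_lie_sum, smul_lie, lie_smul (R := R), lie_M_mul_D_M_mul_D, smul_sub,
    Finset.sum_sub_distrib, smul_ite, smul_zero]
  conv_lhs => enter [2]; rw [Finset.sum_comm]
  simp only [Finset.sum_ite_eq, ← Finset.sum_filter, hfilter, add_comm c a, Finset.smul_sum,
    ← Finset.sum_sub_distrib]
  refine Finset.sum_congr rfl fun j _ => ?_
  rw [show c + (a + j) = a + c + j by omega, show a + (c + j) = a + c + j by omega,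
    smul_smul, smul_smul, smul_smul, ← sub_smul]
  congr 1
  push_cast
  ring

/-- The second summand is written as a function of `c + i`, so that summing it over `i` is an
index shift. -/
theorem smul_lie_D_mul_D_witt {a c N i : ℕ} (h : a + c ≤ N) (hi : i ≤ a) :
    ((i * (a - i) : ℕ) : R) • ⁅F.D i * F.D (a - i), F.witt R N c⁆ =
      ((i * (a + c - i) * (a - i) : ℕ) : R) • (F.D i * F.D (a + c - i)) +
      (((c + i) * (a + c - (c + i)) * (c + i - c) : ℕ) : R) •
        (F.D (c + i) * F.D (a + c - (c + i))) := by
  have h₁ := F.smul_lie_D_witt (R := R) (a := a - i) (c := c) (N := N) (by omega)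
  have h₂ := F.smul_lie_D_witt (R := R) (a := i) (c := c) (N := N) (by omega)
  rw [show c + (a - i) = a + c - i by omega] at h₁
  rw [show a + c - (c + i) = a - i by omega, show c + i - c = i by omega, Ring.mul_lie, smul_add]
  congr 1
  · calc ((i * (a - i) : ℕ) : R) • (F.D i * ⁅F.D (a - i), F.witt R N c⁆)
        = (i : R) • (F.D i * ((a - i : ℕ) : R) • ⁅F.D (a - i), F.witt R N c⁆) := by
          rw [mul_smul_comm, smul_smul, Nat.cast_mul]
      _ = _ := by rw [h₁, mul_smul_comm, smul_smul]; congr 1; push_cast; ring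
  · calc ((i * (a - i) : ℕ) : R) • (⁅F.D i, F.witt R N c⁆ * F.D (a - i))
        = ((a - i : ℕ) : R) • (((i : R) • ⁅F.D i, F.witt R N c⁆) * F.D (a - i)) := by
          rw [smul_mul_assoc, smul_smul, Nat.cast_mul, mul_comm]
      _ = _ := by rw [h₂, smul_mul_assoc, smul_smul]; congr 1; push_cast; ring

/-- The truncated subtractions `a - k` and `k - c` vanish for `k ≥ a` and `k ≤ c`. -/
theorem lie_quadratic_witt {a c N : ℕ} (h : a + c ≤ N) :
    ⁅F.quadratic R a, F.witt R N c⁆ = ∑ k ∈ Finset.range (a + c + 1),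
      ((k * (a + c - k) * ((a - k) + (k - c)) : ℕ) : R) • (F.D k * F.D (a + c - k)) := by
  rw [quadratic, sum_lie]
  simp only [smul_lie]
  rw [Finset.sum_congr rfl fun i hi =>
      F.smul_lie_D_mul_D_witt h (Nat.lt_succ_iff.mp (Finset.mem_range.mp hi)),
    Finset.sum_add_distrib]
  have h₁ : ∑ i ∈ Finset.range (a + 1),
        ((i * (a + c - i) * (a - i) : ℕ) : R) • (F.D i * F.D (a + c - i)) =
      ∑ k ∈ Finset.range (a + c + 1),
        ((k * (a + c - k) * (a - k) : ℕ) : R) • (F.D k * F.D (a + c - k)) := by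
    refine Finset.sum_subset (Finset.range_subset_range.2 (by omega)) fun k hk hka => ?_
    simp only [Finset.mem_range] at hk hka
    simp [Nat.sub_eq_zero_of_le (show a ≤ k by omega)]
  have h₂ : ∑ i ∈ Finset.range (a + 1), (((c + i) * (a + c - (c + i)) * (c + i - c) : ℕ) : R) •
        (F.D (c + i) * F.D (a + c - (c + i))) =
      ∑ k ∈ Finset.range (a + c + 1),
        ((k * (a + c - k) * (k - c) : ℕ) : R) • (F.D k * F.D (a + c - k)) := by
    rw [show a + c + 1 = c + (a + 1) by omega, Finset.sum_range_add _ c (a + 1),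
      Finset.sum_eq_zero (s := Finset.range c) fun k hk => ?_, zero_add]
    simp [Nat.sub_eq_zero_of_le (Finset.mem_range.mp hk).le]
  rw [h₁, h₂, ← Finset.sum_add_distrib]
  refine Finset.sum_congr rfl fun k _ => ?_
  rw [← add_smul, ← Nat.cast_add, ← mul_add]

theorem lie_quadratic_witt_sub_lie_quadratic_witt {a c N : ℕ} (h : a + c ≤ N) :
    ⁅F.quadratic R a, F.witt R N c⁆ - ⁅F.quadratic R c, F.witt R N a⁆ =
      ((a : R) - c) • F.quadratic R (a + c) := by
  rw [F.lie_quadratic_witt h, F.lie_quadratic_witt (by omega : c + a ≤ N), add_comm c a,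
    quadratic, Finset.smul_sum, ← Finset.sum_sub_distrib]
  refine Finset.sum_congr rfl fun k _ => ?_
  rw [← sub_smul, smul_smul]
  congr 1
  push_cast
  linear_combination ((k : R) * ((a + c - k : ℕ) : R)) *
    (natCast_tsub_sub_natCast_tsub (R := R) a k - natCast_tsub_sub_natCast_tsub (R := R) c k)

theorem commute_D_quadratic (a b : ℕ) : Commute (F.D a) (F.quadratic R b) :=
  Commute.sum_right _ _ _ fun i _ =>
    ((F.commute_D a i).mul_right (F.commute_D a (b - i))).smul_right _

theorem commute_quadratic_quadratic (a b : ℕ) : Commute (F.quadratic R a) (F.quadratic R b) :=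
  Commute.sum_left _ _ _ fun i _ =>
    ((F.commute_D_quadratic i b).mul_left (F.commute_D_quadratic (b := b) (a - i))).smul_left _

theorem commute_D_virasoro {m N : ℕ} (hm : N < m) (α κ μ : R) (b : ℕ) :
    Commute (F.D m) (F.virasoro R α κ μ N b) := by
  have hW : Commute (F.D m) (F.witt R N b) := Commute.sum_right _ _ _ fun j hj => by
    refine (commute_iff_lie_eq.2 ?_).smul_right _
    rw [lie_D_M_mul_D, if_neg (by simp only [Finset.mem_Icc] at hj; omega)]
  exact ((((F.commute_D m b).smul_right _).add_right hW).add_right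
    ((F.commute_D_quadratic m b).smul_right _)).add_right ((Commute.one_right _).smul_right _)

theorem lie_virasoro {a c N : ℕ} (h : a + c ≤ N) (α κ μ : R) :
    ⁅F.virasoro R α κ μ N a, F.virasoro R α κ μ N c⁆ =
      ((a : R) - c) • F.virasoro R α κ μ N (a + c) := by
  have hDW := F.smul_lie_D_witt (R := R) (a := a) (c := c) (N := N) h
  have hWD := F.smul_lie_D_witt (R := R) (a := c) (c := a) (N := N) (by omega)
  rw [add_comm c a] at hDW
  have hGW := F.lie_quadratic_witt_sub_lie_quadratic_witt (R := R) h
  have hWW := F.lie_witt_witt (R := R) N a c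
  have hconst : ((a : R) - c) • (if a + c = 0 then μ else 0) • (1 : A) = 0 := by
    split_ifs with h0
    · obtain ⟨rfl, rfl⟩ : a = 0 ∧ c = 0 := by omega
      simp
    · simp
  have lie_one : ∀ x : A, ⁅x, (1 : A)⁆ = 0 := fun x => (Commute.one_right x).lie_eq
  have one_lie : ∀ x : A, ⁅(1 : A), x⁆ = 0 := fun x => (Commute.one_left x).lie_eq
  simp only [virasoro, add_lie, lie_add, smul_lie, lie_smul (R := R), (F.commute_D a c).lie_eq,
    (F.commute_D_quadratic a c).lie_eq, (F.commute_D_quadratic c a).symm.lie_eq,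
    (F.commute_quadratic_quadratic a c).lie_eq, lie_one, one_lie,
    ← lie_skew (F.witt R N a) (F.D c), ← lie_skew (F.witt R N a) (F.quadratic R c), smul_zero,
    add_zero, smul_add]
  linear_combination (norm := module) α • hDW - α • hWD + hWW + κ • hGW - hconst

end WeylFamily

theorem MvPolynomial.pderiv_pderiv_comm {σ R : Type*} [CommSemiring R] (i j : σ)
    (f : MvPolynomial σ R) : pderiv i (pderiv j f) = pderiv j (pderiv i f) := by
  classical
  induction f using MvPolynomial.induction_on with
  | C a => simp
  | add p q hp hq => simp only [map_add, hp, hq]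
  | mul_X p n hp =>
    simp only [pderiv_mul, map_add, pderiv_X, Pi.single_apply, apply_ite (pderiv _), map_zero,
      Derivation.map_one_eq_zero, hp]
    split_ifs <;> ring

theorem MvPolynomial.pderiv_eq_zero_of_sup_vars_lt {R : Type*} [CommSemiring R]
    {f : MvPolynomial ℕ R} {m : ℕ} (hm : f.vars.sup id < m) : pderiv m f = 0 :=
  pderiv_eq_zero_of_notMem_vars fun hmem => (Finset.le_sup (f := id) hmem).not_gt hm

noncomputable def weylFamily (R : Type*) [CommRing R] :
    WeylFamily (Module.End R (MvPolynomial ℕ R)) where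
  D i := (pderiv i).toLinearMap
  M j := LinearMap.mulLeft R (X j - if j = 1 then 1 else 0)
  commute_D i j := LinearMap.ext fun f => pderiv_pderiv_comm i j f
  commute_M i j := LinearMap.ext fun f => mul_left_comm _ _ f
  lie_D_M i j := by
    refine LinearMap.ext fun f => ?_
    have hq : pderiv i (X j - if j = 1 then 1 else 0 : MvPolynomial ℕ R) =
        if i = j then 1 else 0 := by
      rw [map_sub, pderiv_X, apply_ite (pderiv i), Derivation.map_one_eq_zero, map_zero, ite_self,
        sub_zero, Pi.single_comm, Pi.single_apply]
    simp only [Ring.lie_def, LinearMap.sub_apply, Module.End.mul_apply, LinearMap.mulLeft_apply,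
      Derivation.coeFn_coe, pderiv_mul, hq]
    split_ifs <;> simp

theorem pderiv_virasoro_apply_eq_zero {R : Type*} [CommRing R] {N : ℕ} {f : MvPolynomial ℕ R}
    (hf : ∀ m, N < m → pderiv m f = 0) (α κ μ : R) (b : ℕ) :
    ∀ m, N < m → pderiv m ((weylFamily R).virasoro R α κ μ N b f) = 0 := fun m hm => by
  have h := LinearMap.congr_fun ((weylFamily R).commute_D_virasoro hm α κ μ b).eq f
  simp only [Module.End.mul_apply] at h
  exact h.trans ((congrArg _ (hf m hm)).trans (map_zero _))

theorem vir_eq_virasoro_apply {N : ℕ} {f : MvPolynomial ℕ ℝ} (hf : ∀ m, N < m → pderiv m f = 0)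
    (u v ε : ℝ) (b : ℕ) :
    Vir u v ε b f = (weylFamily ℝ).virasoro ℝ (u + v) (ε ^ 2)⁻¹ ((ε ^ 2)⁻¹ * (u * v)) N b f := by
  have hW : (∑ᶠ j : ℕ, if 1 ≤ j then
      ((b + j : ℕ) : ℝ) • ((X j - if j = 1 then 1 else 0) * pderiv (b + j) f) else 0) =
      (weylFamily ℝ).witt ℝ N b f := by
    rw [WeylFamily.witt, LinearMap.sum_apply, finsum_eq_sum_of_support_subset _ fun j hj => ?_]
    · refine Finset.sum_congr rfl fun j hj => ?_
      rw [if_pos (Finset.mem_Icc.mp hj).1]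
      rfl
    · contrapose! hj
      simp only [Finset.coe_Icc, Set.mem_Icc, not_and_or, not_le] at hj
      rw [Function.notMem_support]
      rcases hj with hj | hj
      · rw [if_neg (by omega)]
      · rw [hf (b + j) (by omega), mul_zero, smul_zero, ite_self]
  have hG : ∑ i ∈ Finset.Ioo 0 b, ((i * (b - i) : ℕ) : ℝ) • pderiv i (pderiv (b - i) f) =
      (weylFamily ℝ).quadratic ℝ b f := by
    rw [WeylFamily.quadratic, LinearMap.sum_apply]
    refine Finset.sum_subset (fun i hi => ?_) fun i hi hi' => ?_
    · simp only [Finset.mem_Ioo, Finset.mem_range] at hi ⊢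
      omega
    · obtain rfl | rfl : i = 0 ∨ i = b := by
        simp only [Finset.mem_Ioo, Finset.mem_range] at hi hi'
        omega
      all_goals simp
  simp only [Vir, WeylFamily.virasoro, LinearMap.add_apply, LinearMap.smul_apply,
    Module.End.one_apply, hW, hG]
  rfl

theorem virasoro_commutation_general (u v ε : ℝ) (b₁ b₂ : ℕ) (f : MvPolynomial ℕ ℝ) :
    Vir u v ε b₁ (Vir u v ε b₂ f) - Vir u v ε b₂ (Vir u v ε b₁ f)
      = ((b₁ : ℝ) - (b₂ : ℝ)) • Vir u v ε (b₁ + b₂) f := by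
  obtain ⟨N, hN, hf⟩ : ∃ N, b₁ + b₂ ≤ N ∧ ∀ m, N < m → pderiv m f = 0 :=
    ⟨b₁ + b₂ + f.vars.sup id, Nat.le_add_right _ _,
      fun _ hm => pderiv_eq_zero_of_sup_vars_lt (by omega)⟩
  rw [vir_eq_virasoro_apply hf, vir_eq_virasoro_apply hf,
    vir_eq_virasoro_apply (pderiv_virasoro_apply_eq_zero hf _ _ _ _),
    vir_eq_virasoro_apply (pderiv_virasoro_apply_eq_zero hf _ _ _ _), vir_eq_virasoro_apply hf]
  exact (LinearMap.congr_fun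
    ((weylFamily ℝ).lie_virasoro hN (u + v) (ε ^ 2)⁻¹ ((ε ^ 2)⁻¹ * (u * v))) f :)

/-- The operators `L_b` satisfy the Virasoro commutation relations
`[L_{b₁}, L_{b₂}] = (b₁ - b₂) L_{b₁+b₂}` for all `b₁, b₂ ≥ 0`. -/
theorem virasoro_commutation (u v ε : ℝ) (hu : u ≠ 0) (hv : v ≠ 0) (hε : ε ≠ 0)
    (b₁ b₂ : ℕ) (f : MvPolynomial ℕ ℝ) :
    Vir u v ε b₁ (Vir u v ε b₂ f) - Vir u v ε b₂ (Vir u v ε b₁ f)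
      = ((b₁ : ℝ) - (b₂ : ℝ)) • Vir u v ε (b₁ + b₂) f :=
  virasoro_commutation_general u v ε b₁ b₂ f
end

section
/- The generating series h(λ, n, w) := Σ_{i≥0} (1/i!) · (∏_{r=0}^{i-1} (n+r)(w+r)) · λ^{-i} satisfies the three-term recurrence in n: the functions ψ_A(λ) = λ^n · h(-λ, -n, -(n+α)) satisfy the difference equation ψ_A(n+1) + (2n + α + 1)·ψ_A(n) + n(n+α)·ψ_A(n-1) = λ·ψ_A(n), as an identity of formal power series in λ^{-1} (times λ^n). -/
/-!
With `x = -n`, `y = -(n + α)`, the series `waveA n α` is `₂F₀(x, y; ; -X)`, and the shifts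
`n ↦ n ± 1` become `(x, y) ↦ (x ∓ 1, y ∓ 1)`, while `2n + α + 1 = 1 - x - y` and
`n(n + α) = xy`. Comparing coefficients of `X^(j+2)`, all four terms carry the common factor
`xy (x+1)_j (y+1)_j`, and the recurrence reduces to the polynomial identity
`(x-1)(y-1) + (j+2)(x+y-1) + (j+2)(j+1) = (x+j+1)(y+j+1)`.
-/

open PowerSeries Finset

/-- The formal power series in `λ⁻¹` (with `X` standing for `λ⁻¹`) given by
`h(-λ, -n, -(n+α)) = Σ_{i≥0} (1/i!) ∏_{r=0}^{i-1} (-n+r)(-(n+α)+r) · (-λ)^{-i}`,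
i.e. `ψ_A(λ) = λ^n · waveA n α`. -/
noncomputable def waveA (n α : ℝ) : PowerSeries ℝ :=
  PowerSeries.mk fun i =>
    (-1) ^ i * ((i.factorial : ℝ))⁻¹ * ∏ r ∈ Finset.range i, ((-n + r) * (-(n + α) + r))

theorem prod_range_succ_eq_mul_prod_shift {R : Type*} [CommRing R] (x y : R) (i : ℕ) :
    ∏ r ∈ range (i + 1), ((x + r) * (y + r)) =
      x * y * ∏ r ∈ range i, ((x + 1 + r) * (y + 1 + r)) := by
  rw [prod_range_succ']
  push_cast
  simp only [add_assoc, add_comm (1 : R)]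
  ring

section

variable {K : Type*} [Field K]

/-- `h(-λ, x, y)` in the variable `X = λ⁻¹`, i.e. the hypergeometric series `₂F₀(x, y; ; -X)`. -/
noncomputable def hSeries (x y : K) : PowerSeries K :=
  mk fun i => (-1) ^ i * (i.factorial : K)⁻¹ * ∏ r ∈ range i, ((x + r) * (y + r))

theorem coeff_hSeries_recurrence [CharZero K] (x y : K) (j : ℕ) :
    coeff (j + 2) (hSeries (x - 1) (y - 1)) + (1 - x - y) * coeff (j + 1) (hSeries x y) +
      x * y * coeff j (hSeries (x + 1) (y + 1)) = coeff (j + 2) (hSeries x y) := by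
  simp only [hSeries, coeff_mk]
  set P := ∏ r ∈ range j, ((x + 1 + r) * (y + 1 + r))
  have middle : ∏ r ∈ range (j + 1), ((x + r) * (y + r)) = x * y * P :=
    prod_range_succ_eq_mul_prod_shift x y j
  have shifted : ∏ r ∈ range (j + 2), ((x - 1 + r) * (y - 1 + r)) =
      (x - 1) * (y - 1) * (x * y * P) := by
    rw [prod_range_succ_eq_mul_prod_shift, sub_add_cancel, sub_add_cancel, middle]
  have top : ∏ r ∈ range (j + 2), ((x + r) * (y + r)) =
      x * y * P * ((x + (j + 1)) * (y + (j + 1))) := by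
    rw [prod_range_succ, middle]; push_cast; rfl
  have hj : (j : K) + 2 ≠ 0 := by exact_mod_cast Nat.succ_ne_zero (j + 1)
  have hfac : (j.factorial : K) ≠ 0 := Nat.cast_ne_zero.mpr j.factorial_ne_zero
  rw [shifted, middle, top, Nat.factorial_succ, Nat.factorial_succ]
  push_cast
  rw [show (j : K) + 1 + 1 = j + 2 by ring]
  field_simp
  ring

theorem hSeries_recurrence [CharZero K] (x y : K) :
    hSeries (x - 1) (y - 1) + C (1 - x - y) * X * hSeries x y +
      C (x * y) * X ^ 2 * hSeries (x + 1) (y + 1) = hSeries x y := by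
  ext (_ | _ | j) <;>
    simp only [map_add, mul_assoc, coeff_C_mul, pow_two, coeff_succ_X_mul, coeff_zero_X_mul]
  · simp [hSeries]
  · simp [hSeries]
    ring
  · linear_combination coeff_hSeries_recurrence x y j

end

theorem waveA_eq_hSeries (n α : ℝ) : waveA n α = hSeries (-n) (-(n + α)) := rfl

/-- The wave functions `ψ_A(λ) = λ^n h(-λ, -n, -(n+α))` satisfy the difference equation
`ψ_A(n+1) + (2n+α+1) ψ_A(n) + n(n+α) ψ_A(n-1) = λ ψ_A(n)` of the Lax operator
`L = Λ + (2n+α+1) + n(n+α) Λ⁻¹` with eigenvalue `λ`.  After multiplying by `λ^{-(n+1)}`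
it becomes the following identity of formal power series in `X = λ⁻¹`. -/
theorem waveA_difference_equation (n α : ℝ) :
    waveA (n + 1) α + PowerSeries.C (2 * n + α + 1) * PowerSeries.X * waveA n α +
      PowerSeries.C (n * (n + α)) * PowerSeries.X ^ 2 * waveA (n - 1) α = waveA n α := by
  have h := hSeries_recurrence (-n) (-(n + α))
  simp only [waveA_eq_hSeries]
  convert h using 4 <;> ring_nf
end

section
/- The hypergeometric-type series h(λ, n, w) = Σ_{i≥0} (1/i!)(∏_{r=0}^{i-1}(n+r)(w+r)) λ^{-i} satisfies the identity h(-λ, -n, -w)·h(λ, n, w) = 1 + Σ_{μ≥1} c_μ(n,w) λ^{-μ-1} where, writing c_μ(n,w) as the coefficient of λ^{-μ-1} in the product, each c_μ(n,w) is a polynomial in n and w with integer coefficients divisible by nw; in particular the coefficient of λ^{-1} in h(-λ,-n,-w)h(λ,n,w) vanishes and the coefficient of λ^{-2} equals nw. -/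
open PowerSeries Finset MvPolynomial

/-- Coefficient ring `ℚ[n, w]`: `MvPolynomial.X 0` is `n`, `MvPolynomial.X 1` is `w`. -/
abbrev Rnw := MvPolynomial (Fin 2) ℚ

/-- The series `h(λ, n, w) = Σ_{i≥0} (1/i!) ∏_{r=0}^{i-1} (n+r)(w+r) λ^{-i}` as a formal
power series in `X = λ⁻¹` over `ℚ[n, w]`. -/
noncomputable def hPlus : PowerSeries Rnw :=
  PowerSeries.mk fun i =>
    MvPolynomial.C ((i.factorial : ℚ))⁻¹ *
      ∏ r ∈ Finset.range i, ((MvPolynomial.X 0 + (r : Rnw)) * (MvPolynomial.X 1 + (r : Rnw)))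

/-- The series `h(-λ, -n, -w)` as a formal power series in `X = λ⁻¹` over `ℚ[n, w]`. -/
noncomputable def hMinus : PowerSeries Rnw :=
  PowerSeries.mk fun i =>
    MvPolynomial.C ((-1 : ℚ) ^ i * ((i.factorial : ℚ))⁻¹) *
      ∏ r ∈ Finset.range i, ((-MvPolynomial.X 0 + (r : Rnw)) * (-MvPolynomial.X 1 + (r : Rnw)))

/-!
Put `h = ₂F₀(n, w; ; x)` and `g = ₂F₀(-n, -w; ; -x)` with `x = λ⁻¹`. Both satisfy second-order
ODEs, and for them the Wronskian-type quantity `x² h' g' + nw · gh` has zero derivative, whence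
`x² h' g' = nw (1 - gh)`. With `F = h' g`, `G = h g'` and `P = gh`, this identity and the ODEs
give `F_{k+1} = (n+w+1+k) F_k + 2nw P_{k+1}`, `G_{k+1} = (n+w-1-k) G_k - 2nw P_{k+1}`, and,
comparing coefficients in `x² F G = nw (P - P²)`,
`nw P_{m+2} = -∑ F_i G_j - nw ∑ P_{i+1} P_{j+1}` (over `i + j = m`).
Since `F_0 = nw = -G_0` and `P_1 = 0`, induction shows that every `F_k`, `G_k`, `P_{k+1}` is `nw`
times an integer polynomial: the right-hand side of the last relation is then divisible by
`(nw)²`.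
-/

namespace Submodule

variable {R : Type*} [CommRing R] (T : Subring R) {b x y : R}

theorem mul_mem_span_singleton {c : R} (hc : c ∈ T) (hx : x ∈ T ∙ b) : c * x ∈ T ∙ b :=
  smul_mem _ (⟨c, hc⟩ : T) hx

theorem mul_mem_span_singleton_mul (hx : x ∈ T ∙ b) (hy : y ∈ T ∙ b) : x * y ∈ T ∙ (b * b) := by
  rw [← Set.singleton_mul_singleton, ← span_mul_span]
  exact mul_mem_mul hx hy

theorem mem_span_singleton_of_mul_mem (hb : IsLeftRegular b) (h : b * x ∈ T ∙ (b * b)) :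
    x ∈ T ∙ b := by
  obtain ⟨t, ht⟩ := mem_span_singleton.1 h
  exact mem_span_singleton.2 ⟨t, hb (by simpa only [mul_smul_comm] using ht)⟩

end Submodule

open Submodule in
theorem mem_span_singleton_of_recurrences {R : Type*} [CommRing R] {T : Subring R} {a b : R}
    (ha : a ∈ T) (hb : b ∈ T) (hreg : IsLeftRegular b) {F G P : ℕ → R}
    (hF₀ : F 0 ∈ T ∙ b) (hG₀ : G 0 ∈ T ∙ b) (hP₁ : P 1 ∈ T ∙ b)
    (hF : ∀ k : ℕ, F (k + 1) = (a + 1 + k) * F k + 2 * b * P (k + 1))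
    (hG : ∀ k : ℕ, G (k + 1) = (a - 1 - k) * G k - 2 * b * P (k + 1))
    (hFG : ∀ m, ∑ p ∈ antidiagonal m, F p.1 * G p.2 =
      -b * P (m + 2) - b * ∑ p ∈ antidiagonal m, P (p.1 + 1) * P (p.2 + 1))
    (k : ℕ) : P (k + 1) ∈ T ∙ b := by
  have h2b : 2 * b ∈ T := T.mul_mem (natCast_mem T 2) hb
  suffices ∀ j, F j ∈ T ∙ b ∧ G j ∈ T ∙ b ∧ P (j + 1) ∈ T ∙ b from (this k).2.2
  intro j
  induction j using Nat.strong_induction_on with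
  | _ j ih =>
  rcases j with _ | m
  · exact ⟨hF₀, hG₀, hP₁⟩
  obtain ⟨hFm, hGm, hPm⟩ := ih m m.lt_succ_self
  have hαm : a + 1 + m ∈ T := T.add_mem (T.add_mem ha T.one_mem) (natCast_mem T m)
  have hβm : a - 1 - m ∈ T := T.sub_mem (T.sub_mem ha T.one_mem) (natCast_mem T m)
  refine ⟨?_, ?_, ?_⟩
  · rw [hF]
    exact add_mem (mul_mem_span_singleton T hαm hFm) (mul_mem_span_singleton T h2b hPm)
  · rw [hG]
    exact sub_mem (mul_mem_span_singleton T hβm hGm) (mul_mem_span_singleton T h2b hPm)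
  · have hFG_mem : ∑ p ∈ antidiagonal m, F p.1 * G p.2 ∈ T ∙ (b * b) := by
      refine sum_mem fun p hp => mul_mem_span_singleton_mul T (ih _ ?_).1 (ih _ ?_).2.1 <;>
        linarith [mem_antidiagonal.1 hp]
    have hPP_mem : ∑ p ∈ antidiagonal m, P (p.1 + 1) * P (p.2 + 1) ∈ T ∙ (b * b) := by
      refine sum_mem fun p hp => mul_mem_span_singleton_mul T (ih _ ?_).2.2 (ih _ ?_).2.2 <;>
        linarith [mem_antidiagonal.1 hp]
    refine mem_span_singleton_of_mul_mem T hreg ?_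
    rw [show b * P (m + 2) = -(∑ p ∈ antidiagonal m, F p.1 * G p.2) -
        b * ∑ p ∈ antidiagonal m, P (p.1 + 1) * P (p.2 + 1) by linear_combination hFG m]
    exact sub_mem (neg_mem hFG_mem) (mul_mem_span_singleton T hb hPP_mem)

namespace PowerSeries

variable {R : Type*} [CommRing R]

theorem coeff_succ_X_sq_mul_derivative (f : R⟦X⟧) (k : ℕ) :
    coeff (k + 1) (X ^ 2 * d⁄dX R f) = k * coeff k f := by
  rcases k with _ | k
  · simp [coeff_X_pow_mul']
  · rw [pow_two, mul_assoc, coeff_succ_X_mul, coeff_succ_X_mul, coeff_derivative, mul_comm]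
    push_cast
    rfl

theorem coeff_succ_of_X_sq_mul_derivative_eq {F Q : R⟦X⟧} {u v : R}
    (h : X ^ 2 * d⁄dX R F = (C u + C v * X) * F + Q) (k : ℕ) :
    k * coeff k F = u * coeff (k + 1) F + v * coeff k F + coeff (k + 1) Q := by
  have := congrArg (coeff (k + 1)) h
  rwa [coeff_succ_X_sq_mul_derivative, map_add, add_mul, map_add, coeff_C_mul, mul_assoc,
    coeff_C_mul, coeff_succ_X_mul] at this

variable [Algebra ℚ R]

/-- `hypergeometric₂F₀ s n w` is `₂F₀(n, w; ; s X) = ∑ᵢ (n)ᵢ (w)ᵢ sⁱ Xⁱ / i!`. -/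
noncomputable def hypergeometric₂F₀ (s n w : R) : R⟦X⟧ :=
  mk fun i => s ^ i * ((i.factorial : ℚ)⁻¹ • ∏ r ∈ range i, (n + r) * (w + r))

variable (s n w : R)

@[simp]
theorem constantCoeff_hypergeometric₂F₀ : constantCoeff (hypergeometric₂F₀ s n w) = 1 := by
  simp [hypergeometric₂F₀]

theorem coeff_succ_hypergeometric₂F₀ (k : ℕ) :
    (k + 1) * coeff (k + 1) (hypergeometric₂F₀ s n w) =
      s * (n + k) * (w + k) * coeff k (hypergeometric₂F₀ s n w) := by
  have hfac : ((k + 1).factorial : ℚ)⁻¹ * (k + 1) = (k.factorial : ℚ)⁻¹ := by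
    rw [Nat.factorial_succ]
    push_cast
    field_simp
  simp only [hypergeometric₂F₀, coeff_mk, prod_range_succ, pow_succ, Algebra.smul_def]
  rw [← hfac, map_mul, map_add, map_one, map_natCast]
  ring

theorem coeff_one_hypergeometric₂F₀ : coeff 1 (hypergeometric₂F₀ s n w) = s * n * w := by
  simpa using coeff_succ_hypergeometric₂F₀ s n w 0

theorem hypergeometric₂F₀_ode :
    C s * X ^ 2 * d⁄dX R (d⁄dX R (hypergeometric₂F₀ s n w)) =
      (1 - C (s * (n + w + 1)) * X) * d⁄dX R (hypergeometric₂F₀ s n w) -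
        C (s * n * w) * hypergeometric₂F₀ s n w := by
  ext (_ | k)
  · simp only [map_sub, sub_mul, one_mul, mul_assoc, coeff_C_mul, coeff_zero_X_mul,
      coeff_derivative, pow_two]
    simp [coeff_one_hypergeometric₂F₀, mul_assoc]
  · have hrec := coeff_succ_hypergeometric₂F₀ s n w (k + 1)
    rw [mul_assoc, coeff_C_mul, coeff_succ_X_sq_mul_derivative]
    simp only [map_sub, sub_mul, one_mul, mul_assoc, coeff_C_mul, coeff_succ_X_mul,
      coeff_derivative]
    push_cast at hrec ⊢
    linear_combination -hrec

section Pair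

local notation "𝔥₊" => hypergeometric₂F₀ 1 n w
local notation "𝔥₋" => hypergeometric₂F₀ (-1) (-n) (-w)

theorem X_sq_mul_derivative_mul_derivative_hypergeometric₂F₀ :
    X ^ 2 * (d⁄dX R 𝔥₊ * d⁄dX R 𝔥₋) = C (n * w) * (1 - 𝔥₋ * 𝔥₊) := by
  have := IsAddTorsionFree.of_module_rat R
  have hP := hypergeometric₂F₀_ode 1 n w
  have hM := hypergeometric₂F₀_ode (-1) (-n) (-w)
  simp only [map_one, map_neg, map_mul, map_add, one_mul] at hP hM
  apply derivative.ext
  · simp only [Derivation.leibniz, Derivation.leibniz_pow, smul_eq_mul, derivative_X,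
      derivative_C, map_sub, Derivation.map_one_eq_zero, map_mul]
    linear_combination d⁄dX R 𝔥₋ * hP - d⁄dX R 𝔥₊ * hM
  · simp

theorem coeff_succ_derivative_hypergeometric₂F₀_mul (k : ℕ) :
    coeff (k + 1) (d⁄dX R 𝔥₊ * 𝔥₋) =
      (n + w + 1 + k) * coeff k (d⁄dX R 𝔥₊ * 𝔥₋) + 2 * (n * w) * coeff (k + 1) (𝔥₋ * 𝔥₊) := by
  have hP := hypergeometric₂F₀_ode 1 n w
  have hW := X_sq_mul_derivative_mul_derivative_hypergeometric₂F₀ n w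
  have hode : X ^ 2 * d⁄dX R (d⁄dX R 𝔥₊ * 𝔥₋) =
      (C 1 + C (-(n + w + 1)) * X) * (d⁄dX R 𝔥₊ * 𝔥₋) +
        (C (n * w) - C (2 * (n * w)) * (𝔥₋ * 𝔥₊)) := by
    simp only [map_one, map_neg, map_mul, map_add, map_ofNat, one_mul] at hP hW ⊢
    simp only [Derivation.leibniz, smul_eq_mul]
    linear_combination 𝔥₋ * hP + hW
  have := coeff_succ_of_X_sq_mul_derivative_eq hode k
  simp only [map_sub, coeff_C, coeff_C_mul, if_neg k.succ_ne_zero] at this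
  linear_combination -this

theorem coeff_succ_hypergeometric₂F₀_mul_derivative (k : ℕ) :
    coeff (k + 1) (𝔥₊ * d⁄dX R 𝔥₋) =
      (n + w - 1 - k) * coeff k (𝔥₊ * d⁄dX R 𝔥₋) - 2 * (n * w) * coeff (k + 1) (𝔥₋ * 𝔥₊) := by
  have hM := hypergeometric₂F₀_ode (-1) (-n) (-w)
  have hW := X_sq_mul_derivative_mul_derivative_hypergeometric₂F₀ n w
  have hode : X ^ 2 * d⁄dX R (𝔥₊ * d⁄dX R 𝔥₋) =
      (C (-1) + C (n + w - 1) * X) * (𝔥₊ * d⁄dX R 𝔥₋) +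
        (C (n * w) - C (2 * (n * w)) * (𝔥₋ * 𝔥₊)) := by
    simp only [map_one, map_neg, map_mul, map_add, map_sub, map_ofNat] at hM hW ⊢
    simp only [Derivation.leibniz, smul_eq_mul]
    linear_combination -𝔥₊ * hM + hW
  have := coeff_succ_of_X_sq_mul_derivative_eq hode k
  simp only [map_sub, coeff_C, coeff_C_mul, if_neg k.succ_ne_zero] at this
  linear_combination this

theorem coeff_add_two_mul_self_hypergeometric₂F₀_neg_mul (m : ℕ) :
    coeff (m + 2) ((𝔥₋ * 𝔥₊) * (𝔥₋ * 𝔥₊)) = 2 * coeff (m + 2) (𝔥₋ * 𝔥₊) +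
      ∑ p ∈ antidiagonal m, coeff (p.1 + 1) (𝔥₋ * 𝔥₊) * coeff (p.2 + 1) (𝔥₋ * 𝔥₊) := by
  rw [coeff_mul, Nat.sum_antidiagonal_succ, Nat.sum_antidiagonal_succ']
  simp only [coeff_zero_eq_constantCoeff, map_mul, constantCoeff_hypergeometric₂F₀, mul_one,
    one_mul]
  ring

theorem sum_antidiagonal_coeff_derivative_mul_coeff_mul_derivative (m : ℕ) :
    ∑ p ∈ antidiagonal m, coeff p.1 (d⁄dX R 𝔥₊ * 𝔥₋) * coeff p.2 (𝔥₊ * d⁄dX R 𝔥₋) =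
      -(n * w) * coeff (m + 2) (𝔥₋ * 𝔥₊) -
        n * w * ∑ p ∈ antidiagonal m, coeff (p.1 + 1) (𝔥₋ * 𝔥₊) * coeff (p.2 + 1) (𝔥₋ * 𝔥₊) := by
  have key : X ^ 2 * ((d⁄dX R 𝔥₊ * 𝔥₋) * (𝔥₊ * d⁄dX R 𝔥₋)) =
      C (n * w) * (𝔥₋ * 𝔥₊ - (𝔥₋ * 𝔥₊) * (𝔥₋ * 𝔥₊)) := by
    linear_combination (𝔥₋ * 𝔥₊) * X_sq_mul_derivative_mul_derivative_hypergeometric₂F₀ n w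
  have := congrArg (coeff (m + 2)) key
  rw [pow_two, mul_assoc, coeff_succ_X_mul, coeff_succ_X_mul, coeff_mul, coeff_C_mul, map_sub,
    coeff_add_two_mul_self_hypergeometric₂F₀_neg_mul] at this
  linear_combination this

theorem coeff_zero_derivative_hypergeometric₂F₀_mul : coeff 0 (d⁄dX R 𝔥₊ * 𝔥₋) = n * w := by
  simp [coeff_mul, coeff_derivative, coeff_one_hypergeometric₂F₀]

theorem coeff_zero_hypergeometric₂F₀_mul_derivative : coeff 0 (𝔥₊ * d⁄dX R 𝔥₋) = -(n * w) := by
  simp [coeff_mul, coeff_derivative, coeff_one_hypergeometric₂F₀]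

theorem coeff_one_hypergeometric₂F₀_neg_mul : coeff 1 (𝔥₋ * 𝔥₊) = 0 := by
  simp [coeff_mul, Nat.sum_antidiagonal_succ, coeff_one_hypergeometric₂F₀]

theorem coeff_two_hypergeometric₂F₀_neg_mul : coeff 2 (𝔥₋ * 𝔥₊) = n * w := by
  have := IsAddTorsionFree.of_module_rat R
  have hF := coeff_succ_derivative_hypergeometric₂F₀_mul n w 0
  have hG := coeff_succ_hypergeometric₂F₀_mul_derivative n w 0
  rw [coeff_zero_derivative_hypergeometric₂F₀_mul, coeff_one_hypergeometric₂F₀_neg_mul] at hF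
  rw [coeff_zero_hypergeometric₂F₀_mul_derivative, coeff_one_hypergeometric₂F₀_neg_mul] at hG
  have hD := congrArg (coeff 1) (Derivation.leibniz (d⁄dX R) 𝔥₋ 𝔥₊)
  rw [coeff_derivative, map_add, smul_eq_mul, smul_eq_mul, mul_comm 𝔥₋ (d⁄dX R 𝔥₊)] at hD
  refine nsmul_right_injective two_ne_zero ?_
  simp only [two_nsmul]
  push_cast at hD hF hG
  linear_combination hD + hF + hG

theorem coeff_succ_hypergeometric₂F₀_neg_mul_mem_span {T : Subring R} (hn : n ∈ T) (hw : w ∈ T)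
    (hreg : IsLeftRegular (n * w)) (k : ℕ) : coeff (k + 1) (𝔥₋ * 𝔥₊) ∈ T ∙ (n * w) := by
  refine mem_span_singleton_of_recurrences (T.add_mem hn hw) (T.mul_mem hn hw) hreg
    (F := fun i => coeff i (d⁄dX R 𝔥₊ * 𝔥₋)) (G := fun i => coeff i (𝔥₊ * d⁄dX R 𝔥₋))
    (P := fun i => coeff i (𝔥₋ * 𝔥₊)) ?_ ?_ ?_
    (coeff_succ_derivative_hypergeometric₂F₀_mul n w)
    (coeff_succ_hypergeometric₂F₀_mul_derivative n w)
    (sum_antidiagonal_coeff_derivative_mul_coeff_mul_derivative n w) k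
  · rw [coeff_zero_derivative_hypergeometric₂F₀_mul]
    exact Submodule.mem_span_singleton_self _
  · rw [coeff_zero_hypergeometric₂F₀_mul_derivative]
    exact neg_mem (Submodule.mem_span_singleton_self _)
  · rw [coeff_one_hypergeometric₂F₀_neg_mul]
    exact zero_mem _

end Pair

end PowerSeries

theorem hPlus_eq_hypergeometric₂F₀ :
    hPlus = hypergeometric₂F₀ (1 : Rnw) (MvPolynomial.X 0) (MvPolynomial.X 1) := by
  ext i : 1
  simp [hPlus, hypergeometric₂F₀, MvPolynomial.smul_eq_C_mul]

theorem hMinus_eq_hypergeometric₂F₀ :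
    hMinus = hypergeometric₂F₀ (-1 : Rnw) (-MvPolynomial.X 0) (-MvPolynomial.X 1) := by
  ext i : 1
  simp [hMinus, hypergeometric₂F₀, MvPolynomial.smul_eq_C_mul, mul_assoc]

/-- The product `h(-λ,-n,-w)·h(λ,n,w) = 1 + Σ_{μ≥1} c_μ(n,w) λ^{-μ-1}`: its constant
coefficient is `1`, the coefficient of `λ^{-1}` vanishes, the coefficient of `λ^{-2}`
equals `nw`, and every coefficient `c_μ` of `λ^{-μ-1}` is an integer-coefficient
polynomial divisible by `nw`. -/
theorem hProduct_coefficients :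
    PowerSeries.coeff 0 (hMinus * hPlus) = 1 ∧
    PowerSeries.coeff 1 (hMinus * hPlus) = 0 ∧
    PowerSeries.coeff 2 (hMinus * hPlus) = MvPolynomial.X 0 * MvPolynomial.X 1 ∧
    ∀ μ : ℕ, 1 ≤ μ → ∃ q : MvPolynomial (Fin 2) ℤ,
      PowerSeries.coeff (μ + 1) (hMinus * hPlus) =
        MvPolynomial.X 0 * MvPolynomial.X 1 * (MvPolynomial.map (Int.castRingHom ℚ) q) := by
  rw [hMinus_eq_hypergeometric₂F₀, hPlus_eq_hypergeometric₂F₀]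
  refine ⟨by simp, coeff_one_hypergeometric₂F₀_neg_mul _ _,
    coeff_two_hypergeometric₂F₀_neg_mul _ _, fun μ _ => ?_⟩
  have hX (i : Fin 2) : (MvPolynomial.X i : Rnw) ∈ (MvPolynomial.map (Int.castRingHom ℚ)).range :=
    ⟨MvPolynomial.X i, map_X _ _⟩
  have hreg : IsLeftRegular (MvPolynomial.X 0 * MvPolynomial.X 1 : Rnw) :=
    (IsRegular.of_ne_zero (mul_ne_zero (X_ne_zero 0) (X_ne_zero 1))).left
  obtain ⟨⟨_, q, rfl⟩, hq⟩ := Submodule.mem_span_singleton.1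
    (coeff_succ_hypergeometric₂F₀_neg_mul_mem_span _ _ (hX 0) (hX 1) hreg μ)
  exact ⟨q, by rw [← hq, Subring.smul_def, smul_eq_mul, mul_comm]⟩
end
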